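/- Let n ≥ 2, let α ∈ (0,1), let a ∈ ℝ, let w : {1,…,n} → ℝ be nonnegative weights with Σ_{i=1}^n w_i = 1, and let ψ : {1,…,n} → ℝ satisfy |ψ(r+1) − ψ(r)| ≤ C·r^{−α} for all integers 1 ≤ r ≤ n−1, where C ≥ 0. For each permutation π of {1,…,n} define q_π = σ(a + Σ_{i=1}^n w_i·ψ(π(i))), and let q̄ be the average of q_π over all n! permutations. Then E_π|q_π − q̄| ≤ (C/(4(1−α)))·n^{1−α}, where the expectation is the uniform average over all permutations. -/

import Mathlib

/-! The logistic function is `1/4`-Lipschitz, so any two predictions `q_π`, `q_π'` differ by at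
most a quarter of the spread of their arguments `a + ∑ wᵢ ψ(π i + 1)`. Being convex combinations
of values of `ψ` on `{1,…,n}`, those arguments differ by at most the total variation
`∑_{r<n} C r^{-α}`, which telescopes against the concave `x ↦ x^{1-α}` to `C n^{1-α}/(1-α)`.
Finally, a family whose pairwise distances are at most `D` has mean absolute deviation at most `D`. -/

/-- The logistic (sigmoid) function `σ(t) = 1 / (1 + e^{-t})`. -/
noncomputable def logistic (t : ℝ) : ℝ := 1 / (1 + Real.exp (-t))

/-- The prediction under permutation `π`: `q_π = σ(a + ∑_i w_i·ψ(pos_π(i)))`, where the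
position of chunk `i` in `{1,…,n}` is encoded as `(π i : ℕ) + 1`. -/
noncomputable def qperm (n : ℕ) (a : ℝ) (w : Fin n → ℝ) (ψ : ℕ → ℝ)
    (π : Equiv.Perm (Fin n)) : ℝ :=
  logistic (a + ∑ i : Fin n, w i * ψ ((π i : ℕ) + 1))

open Finset
open scoped BigOperators Nat

lemma logistic_eq_sigmoid : logistic = Real.sigmoid := by
  funext t
  rw [logistic, Real.sigmoid_def, one_div]

lemma sigmoid_mul_one_sub_le (x : ℝ) : Real.sigmoid x * (1 - Real.sigmoid x) ≤ 4⁻¹ := by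
  nlinarith [sq_nonneg (Real.sigmoid x - 2⁻¹)]

lemma lipschitzWith_sigmoid : LipschitzWith 4⁻¹ Real.sigmoid := by
  refine lipschitzWith_of_nnnorm_deriv_le (fun _ ↦ differentiableAt_sigmoid) fun x ↦ ?_
  have hx : 0 ≤ Real.sigmoid x * (1 - Real.sigmoid x) :=
    mul_nonneg (Real.sigmoid_nonneg x) (sub_nonneg.2 (Real.sigmoid_le_one x))
  rw [← NNReal.coe_le_coe, coe_nnnorm, Real.deriv_sigmoid, Real.norm_of_nonneg hx]
  simpa using sigmoid_mul_one_sub_le x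

/-- Weighted AM–GM `(r-1)^{1-α} r^α ≤ (1-α)(r-1) + α r`, divided by `r^α`. -/
lemma one_sub_mul_rpow_neg_le_rpow_sub_rpow {α r : ℝ} (hα0 : 0 ≤ α) (hα1 : α ≤ 1) (hr : 1 ≤ r) :
    (1 - α) * r ^ (-α) ≤ r ^ (1 - α) - (r - 1) ^ (1 - α) := by
  have hr0 : 0 < r := by linarith
  have amgm := Real.geom_mean_le_arith_mean2_weighted (sub_nonneg.2 hα1) hα0 (sub_nonneg.2 hr)
    hr0.le (by ring)
  have hinv : r ^ α * r ^ (-α) = 1 := by rw [← Real.rpow_add hr0]; simp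
  have hmul : r * r ^ (-α) = r ^ (1 - α) := by
    rw [sub_eq_add_neg, Real.rpow_add hr0, Real.rpow_one]
  have := mul_le_mul_of_nonneg_right amgm (Real.rpow_nonneg hr0.le (-α))
  linear_combination this - (r - 1) ^ (1 - α) * hinv + hmul

lemma sum_range_rpow_neg_le {α : ℝ} (hα0 : 0 ≤ α) (hα1 : α < 1) (m : ℕ) :
    ∑ k ∈ range m, ((k : ℝ) + 1) ^ (-α) ≤ (m : ℝ) ^ (1 - α) / (1 - α) := by
  rw [le_div_iff₀ (sub_pos.2 hα1), sum_mul]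
  calc ∑ k ∈ range m, ((k : ℝ) + 1) ^ (-α) * (1 - α)
      ≤ ∑ k ∈ range m, (((k + 1 : ℕ) : ℝ) ^ (1 - α) - (k : ℝ) ^ (1 - α)) := by
        refine sum_le_sum fun k _ ↦ ?_
        have := one_sub_mul_rpow_neg_le_rpow_sub_rpow hα0 hα1.le
          (le_add_of_nonneg_left k.cast_nonneg)
        rw [add_sub_cancel_right] at this
        push_cast
        linarith
    _ = (m : ℝ) ^ (1 - α) := by
        rw [sum_range_sub (fun k ↦ (k : ℝ) ^ (1 - α)), Nat.cast_zero,
          Real.zero_rpow (sub_pos.2 hα1).ne', sub_zero]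

lemma sum_Ico_one_rpow_neg_le {α : ℝ} (hα0 : 0 ≤ α) (hα1 : α < 1) (n : ℕ) :
    ∑ r ∈ Ico 1 n, (r : ℝ) ^ (-α) ≤ (n : ℝ) ^ (1 - α) / (1 - α) := by
  calc ∑ r ∈ Ico 1 n, (r : ℝ) ^ (-α) = ∑ k ∈ range (n - 1), ((k : ℝ) + 1) ^ (-α) := by
        rw [sum_Ico_eq_sum_range]
        push_cast
        simp only [add_comm]
    _ ≤ ((n - 1 : ℕ) : ℝ) ^ (1 - α) / (1 - α) := sum_range_rpow_neg_le hα0 hα1 _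
    _ ≤ (n : ℝ) ^ (1 - α) / (1 - α) := by
        gcongr
        exact Nat.sub_le n 1

lemma abs_sub_le_of_abs_sub_succ_le {n : ℕ} {α C : ℝ} (hα0 : 0 ≤ α) (hα1 : α < 1) (hC : 0 ≤ C)
    {ψ : ℕ → ℝ} (hreg : ∀ r : ℕ, 1 ≤ r → r ≤ n - 1 → |ψ (r + 1) - ψ r| ≤ C * (r : ℝ) ^ (-α))
    {s t : ℕ} (hs : 1 ≤ s) (hsn : s ≤ n) (ht : 1 ≤ t) (htn : t ≤ n) :
    |ψ s - ψ t| ≤ C * (n : ℝ) ^ (1 - α) / (1 - α) := by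
  wlog hst : s ≤ t generalizing s t
  · rw [abs_sub_comm]
    exact this ht htn hs hsn (le_of_not_ge hst)
  calc |ψ s - ψ t| ≤ ∑ r ∈ Ico s t, dist (ψ r) (ψ (r + 1)) := dist_le_Ico_sum_dist ψ hst
    _ ≤ ∑ r ∈ Ico s t, C * (r : ℝ) ^ (-α) := by
        refine sum_le_sum fun r hr ↦ ?_
        rw [mem_Ico] at hr
        rw [dist_comm, Real.dist_eq]
        exact hreg r (hs.trans hr.1) (by omega)
    _ ≤ ∑ r ∈ Ico 1 n, C * (r : ℝ) ^ (-α) :=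
        sum_le_sum_of_subset_of_nonneg (Ico_subset_Ico hs htn) fun _ _ _ ↦ by positivity
    _ ≤ C * (n : ℝ) ^ (1 - α) / (1 - α) := by
        rw [← mul_sum, mul_div_assoc]
        exact mul_le_mul_of_nonneg_left (sum_Ico_one_rpow_neg_le hα0 hα1 n) hC

lemma abs_sum_mul_sub_sum_mul_le {ι : Type*} [Fintype ι] {w x y : ι → ℝ} {B : ℝ}
    (hw0 : ∀ i, 0 ≤ w i) (hw1 : ∑ i, w i = 1) (hxy : ∀ i, |x i - y i| ≤ B) :
    |∑ i, w i * x i - ∑ i, w i * y i| ≤ B :=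
  calc |∑ i, w i * x i - ∑ i, w i * y i| = |∑ i, w i * (x i - y i)| := by
        simp only [mul_sub, sum_sub_distrib]
    _ ≤ ∑ i, w i * |x i - y i| := by
        refine (abs_sum_le_sum_abs _ _).trans_eq (sum_congr rfl fun i _ ↦ ?_)
        rw [abs_mul, abs_of_nonneg (hw0 i)]
    _ ≤ ∑ i, w i * B := sum_le_sum fun i _ ↦ mul_le_mul_of_nonneg_left (hxy i) (hw0 i)
    _ = B := by rw [← sum_mul, hw1, one_mul]

lemma abs_qperm_sub_qperm_le {n : ℕ} {α C : ℝ} (hα0 : 0 ≤ α) (hα1 : α < 1) (hC : 0 ≤ C)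
    (a : ℝ) {w : Fin n → ℝ} (hw0 : ∀ i, 0 ≤ w i) (hw1 : ∑ i, w i = 1) {ψ : ℕ → ℝ}
    (hreg : ∀ r : ℕ, 1 ≤ r → r ≤ n - 1 → |ψ (r + 1) - ψ r| ≤ C * (r : ℝ) ^ (-α))
    (π π' : Equiv.Perm (Fin n)) :
    |qperm n a w ψ π - qperm n a w ψ π'| ≤ C / (4 * (1 - α)) * (n : ℝ) ^ (1 - α) := by
  have hargs : |∑ i, w i * ψ ((π i : ℕ) + 1) - ∑ i, w i * ψ ((π' i : ℕ) + 1)| ≤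
      C * (n : ℝ) ^ (1 - α) / (1 - α) :=
    abs_sum_mul_sub_sum_mul_le hw0 hw1 fun i ↦ abs_sub_le_of_abs_sub_succ_le hα0 hα1 hC hreg
      le_add_self (π i).isLt le_add_self (π' i).isLt
  have hlip := lipschitzWith_sigmoid.dist_le_mul (a + ∑ i, w i * ψ ((π i : ℕ) + 1))
    (a + ∑ i, w i * ψ ((π' i : ℕ) + 1))
  rw [Real.dist_eq, Real.dist_eq, add_sub_add_left_eq_sub] at hlip
  rw [qperm, qperm, logistic_eq_sigmoid]
  calc _ ≤ 4⁻¹ * (C * (n : ℝ) ^ (1 - α) / (1 - α)) := by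
        push_cast at hlip
        linarith
    _ = C / (4 * (1 - α)) * (n : ℝ) ^ (1 - α) := by
        rw [div_mul_eq_mul_div, div_mul_eq_div_div_swap]
        ring

lemma expect_abs_sub_expect_le {ι : Type*} [Fintype ι] [Nonempty ι] (q : ι → ℝ) {D : ℝ}
    (hD : ∀ i j, |q i - q j| ≤ D) : 𝔼 i, |q i - 𝔼 j, q j| ≤ D := by
  refine expect_le univ_nonempty fun i _ ↦ ?_
  calc |q i - 𝔼 j, q j| = |𝔼 j, (q i - q j)| := by
        rw [expect_sub_distrib, expect_const univ_nonempty]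
    _ ≤ 𝔼 j, |q i - q j| := abs_expect_le _ _
    _ ≤ D := expect_le univ_nonempty fun j _ ↦ hD i j

lemma one_div_factorial_mul_sum_perm (n : ℕ) (f : Equiv.Perm (Fin n) → ℝ) :
    1 / (n ! : ℝ) * ∑ π, f π = 𝔼 π, f π := by
  rw [expect_eq_sum_div_card, card_univ, Fintype.card_perm, Fintype.card_fin, one_div_mul_eq_div]

theorem qmv_subharmonic_general (n : ℕ) (α : ℝ) (hα0 : 0 < α) (hα1 : α < 1)
    (a : ℝ) (C : ℝ) (hC : 0 ≤ C)
    (w : Fin n → ℝ) (hw0 : ∀ i, 0 ≤ w i) (hw1 : ∑ i, w i = 1) (ψ : ℕ → ℝ)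
    (hreg : ∀ r : ℕ, 1 ≤ r → r ≤ n - 1 → |ψ (r + 1) - ψ r| ≤ C * (r : ℝ) ^ (-α)) :
    (1 / (Nat.factorial n : ℝ)) *
        ∑ π : Equiv.Perm (Fin n),
          |qperm n a w ψ π -
            (1 / (Nat.factorial n : ℝ)) * ∑ π' : Equiv.Perm (Fin n), qperm n a w ψ π'| ≤
      (C / (4 * (1 - α))) * (n : ℝ) ^ (1 - α) := by
  simp only [one_div_factorial_mul_sum_perm]
  exact expect_abs_sub_expect_le _ (abs_qperm_sub_qperm_le hα0.le hα1 hC a hw0 hw1 hreg)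

/-- **Quantified Martingale Violation, subharmonic decay (α ∈ (0,1)).**
Under the first-order positional sensitivity model with `(α, C)`-regular potential `ψ`,
the permutation-induced dispersion satisfies `E_π|q_π − q̄| ≤ (C/(4(1−α)))·n^{1−α}`. -/
theorem qmv_subharmonic (n : ℕ) (hn : 2 ≤ n) (α : ℝ) (hα0 : 0 < α) (hα1 : α < 1)
    (a : ℝ) (C : ℝ) (hC : 0 ≤ C)
    (w : Fin n → ℝ) (hw0 : ∀ i, 0 ≤ w i) (hw1 : ∑ i, w i = 1) (ψ : ℕ → ℝ)
    (hreg : ∀ r : ℕ, 1 ≤ r → r ≤ n - 1 → |ψ (r + 1) - ψ r| ≤ C * (r : ℝ) ^ (-α)) :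
    (1 / (Nat.factorial n : ℝ)) *
        ∑ π : Equiv.Perm (Fin n),
          |qperm n a w ψ π -
            (1 / (Nat.factorial n : ℝ)) * ∑ π' : Equiv.Perm (Fin n), qperm n a w ψ π'| ≤
      (C / (4 * (1 - α))) * (n : ℝ) ^ (1 - α) :=
  qmv_subharmonic_general n α hα0 hα1 a C hC w hw0 hw1 ψ hreg
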